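/- arXiv:2509.25118 — 4 statements merged into one kernel-verified Lean document; each statement's English description precedes it below -/
import Mathlib

section
/- Let G be a finite group with 𝒥(G) < 2. Then G satisfies the Herzog–Schönheim conjecture: if k ≥ 2, H_1,…,H_k are proper subgroups of G and x_1,…,x_k are elements of G such that G = ⋃_{i=1}^k H_i x_i and H_i x_i ∩ H_j x_j = ∅ for all i ≠ j, then [G:H_i] = [G:H_j] for some i ≠ j. -/
/-- `𝒥(G)`: the sum of the reciprocals of the indices of the subgroups of a finite
group `G`, each distinct index counted exactly once. -/
noncomputable def HSJ (G : Type*) [Group G] [Finite G] : ℝ :=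
  ∑ᶠ m ∈ Set.range (fun H : Subgroup G => H.index), (1 : ℝ) / (m : ℝ)

/-!
If the right cosets `H i * x i` partition `G`, counting elements gives `∑ |H i| = |G|`, i.e.
`∑ 1 / [G : H i] = 1`. Were the indices pairwise distinct (and all `≠ 1`, the subgroups being
proper), they together with the index `1 = [G : G]` would be distinct elements of `I(G)` whose
reciprocals already sum to `2`, so `𝒥(G) ≥ 2`.
-/

open Function

namespace Subgroup

variable {G ι : Type*} [Group G] [Finite G] [Fintype ι]

theorem sum_card_eq_card_of_iUnion_rightCosets_eq_univ (H : ι → Subgroup G) (x : ι → G)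
    (hcover : ⋃ i, (· * x i) '' (H i : Set G) = Set.univ)
    (hdisj : Pairwise (Disjoint on fun i => (· * x i) '' (H i : Set G))) :
    ∑ i, Nat.card (H i) = Nat.card G := by
  rw [← Set.ncard_univ, ← hcover, Set.ncard_iUnion_of_finite (fun _ => Set.toFinite _) hdisj,
    finsum_eq_sum_of_fintype]
  refine Finset.sum_congr rfl fun i _ => ?_
  rw [Set.ncard_image_of_injective _ (mul_left_injective (x i))]
  exact (Nat.card_coe_set_eq _).symm

theorem sum_one_div_index_eq_one_of_iUnion_rightCosets_eq_univ (H : ι → Subgroup G)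
    (x : ι → G) (hcover : ⋃ i, (· * x i) '' (H i : Set G) = Set.univ)
    (hdisj : Pairwise (Disjoint on fun i => (· * x i) '' (H i : Set G))) :
    ∑ i, (1 : ℝ) / (H i).index = 1 := by
  have hG : (Nat.card G : ℝ) ≠ 0 := Nat.cast_ne_zero.mpr Nat.card_pos.ne'
  have hterm : ∀ i, (1 : ℝ) / (H i).index = Nat.card (H i) / Nat.card G := fun i => by
    rw [← (H i).index_mul_card, Nat.cast_mul,
      div_mul_cancel_right₀ (Nat.cast_ne_zero.mpr Nat.card_pos.ne'), one_div]
  simp_rw [hterm, ← Finset.sum_div, ← Nat.cast_sum,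
    sum_card_eq_card_of_iUnion_rightCosets_eq_univ H x hcover hdisj, div_self hG]

end Subgroup

theorem sum_one_div_le_HSJ (G : Type*) [Group G] [Finite G] {T : Finset ℕ}
    (hT : ∀ m ∈ T, ∃ K : Subgroup G, K.index = m) :
    ∑ m ∈ T, (1 : ℝ) / m ≤ HSJ G := by
  have hfin : (Set.range fun K : Subgroup G => K.index).Finite := Set.finite_range _
  rw [HSJ, ← hfin.coe_toFinset, finsum_mem_coe_finset]
  refine Finset.sum_le_sum_of_subset_of_nonneg (fun m hm => ?_) fun _ _ _ => by positivity
  simpa using hT m hm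

theorem herzog_schonheim_of_HSJ_lt_two_general (G : Type*) [Group G] [Finite G]
    (hJ : HSJ G < 2)
    (k : ℕ)
    (H : Fin k → Subgroup G) (hprop : ∀ i, H i ≠ ⊤)
    (x : Fin k → G)
    (hcover : (⋃ i, (· * x i) '' (H i : Set G)) = Set.univ)
    (hdisj : ∀ i j, i ≠ j →
      ((· * x i) '' (H i : Set G)) ∩ ((· * x j) '' (H j : Set G)) = ∅) :
    ∃ i j, i ≠ j ∧ (H i).index = (H j).index := by
  by_contra! hdistinct
  have hinj : Injective fun i => (H i).index := fun i j hij =>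
    by_contra fun hne => hdistinct i j hne hij
  have hone : 1 ∉ Finset.univ.image fun i => (H i).index := by
    simp only [Finset.mem_image, Finset.mem_univ, true_and, not_exists]
    exact fun i => mt Subgroup.index_eq_one.mp (hprop i)
  have hsum : ∑ i, (1 : ℝ) / (H i).index = 1 :=
    Subgroup.sum_one_div_index_eq_one_of_iUnion_rightCosets_eq_univ H x hcover
      fun i j hij => Set.disjoint_iff_inter_eq_empty.mpr (hdisj i j hij)
  have hle := sum_one_div_le_HSJ G (T := insert 1 (Finset.univ.image fun i => (H i).index))
    (by
      simp only [Finset.forall_mem_insert, Finset.forall_mem_image]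
      exact ⟨⟨⊤, Subgroup.index_top⟩, fun i _ => ⟨H i, rfl⟩⟩)
  rw [Finset.sum_insert hone, Finset.sum_image fun i _ j _ h => hinj h, hsum] at hle
  norm_num at hle
  linarith

/-- A finite group `G` with `𝒥(G) < 2` satisfies the Herzog–Schönheim conjecture:
if `k ≥ 2` and the right cosets `H i * x i` of proper subgroups `H i` partition `G`,
then two of the subgroups have the same index. -/
theorem herzog_schonheim_of_HSJ_lt_two (G : Type*) [Group G] [Finite G]
    (hJ : HSJ G < 2)
    (k : ℕ) (hk : 2 ≤ k)
    (H : Fin k → Subgroup G) (hprop : ∀ i, H i ≠ ⊤)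
    (x : Fin k → G)
    (hcover : (⋃ i, (· * x i) '' (H i : Set G)) = Set.univ)
    (hdisj : ∀ i j, i ≠ j →
      ((· * x i) '' (H i : Set G)) ∩ ((· * x j) '' (H j : Set G)) = ∅) :
    ∃ i j, i ≠ j ∧ (H i).index = (H j).index :=
  herzog_schonheim_of_HSJ_lt_two_general G hJ k H hprop x hcover hdisj
end

section
/- Let G be a finite group and let N be a normal subgroup of G. Then 𝒥(G) ≤ 𝒥(N) · 𝒥(G/N). -/
open scoped Pointwise

namespace Finset

theorem sum_le_sum_mul_sum_of_subset_mul {M R : Type*} [Mul M] [DecidableEq M] [Semiring R]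
    [PartialOrder R] [IsOrderedAddMonoid R] {f : M → R} (hf_nonneg : ∀ x, 0 ≤ f x)
    (hf_mul : ∀ x y, f (x * y) = f x * f y) {s t u : Finset M} (hu : u ⊆ s * t) :
    ∑ x ∈ u, f x ≤ (∑ x ∈ s, f x) * ∑ y ∈ t, f y :=
  calc ∑ x ∈ u, f x
      ≤ ∑ x ∈ s * t, f x := sum_le_sum_of_subset_of_nonneg hu fun x _ _ ↦ hf_nonneg x
    _ ≤ ∑ p ∈ s ×ˢ t, f (p.1 * p.2) := by
      rw [mul_def]
      exact sum_image_le_of_nonneg fun x _ ↦ hf_nonneg x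
    _ = (∑ x ∈ s, f x) * ∑ y ∈ t, f y := by
      simp_rw [hf_mul, sum_product, sum_mul_sum]

end Finset

theorem finsum_mem_le_finsum_mem_mul_finsum_mem {M R : Type*} [Mul M] [Semiring R]
    [PartialOrder R] [IsOrderedAddMonoid R] {f : M → R} (hf_nonneg : ∀ x, 0 ≤ f x)
    (hf_mul : ∀ x y, f (x * y) = f x * f y) {s t u : Set M} (hs : s.Finite) (ht : t.Finite)
    (hu : u ⊆ s * t) :
    ∑ᶠ x ∈ u, f x ≤ (∑ᶠ x ∈ s, f x) * ∑ᶠ y ∈ t, f y := by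
  classical
  lift s to Finset M using hs
  lift t to Finset M using ht
  rw [← Finset.coe_mul] at hu
  lift u to Finset M using (s * t).finite_toSet.subset hu
  simp only [finsum_mem_coe_finset]
  exact Finset.sum_le_sum_mul_sum_of_subset_mul hf_nonneg hf_mul (Finset.coe_subset.mp hu)

namespace Subgroup

variable {G : Type*} [Group G] (N : Subgroup G) [N.Normal]

theorem index_map_mk' (H : Subgroup G) : (H.map (QuotientGroup.mk' N)).index = (H ⊔ N).index := by
  rw [index_map, QuotientGroup.ker_mk', (QuotientGroup.mk' N).range_eq_top_of_surjective
    (QuotientGroup.mk'_surjective N), index_top, mul_one]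

theorem relIndex_mul_index_sup [N.FiniteIndex] (H : Subgroup G) :
    H.relIndex N * (H ⊔ N).index = H.index := by
  have hN : N.relIndex H ≠ 0 := FiniteIndex.index_ne_zero
  -- both sides, multiplied by `[H : H ⊓ N]`, equal `[G : H ⊓ N]`
  refine Nat.eq_of_mul_eq_mul_left (Nat.pos_of_ne_zero hN) ?_
  calc N.relIndex H * (H.relIndex N * (H ⊔ N).index)
      = H.relIndex N * (N.relIndex (H ⊔ N) * (H ⊔ N).index) := by
        rw [relIndex_sup_right]; ring
    _ = (H ⊓ N).relIndex N * N.index := by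
        rw [relIndex_mul_index le_sup_right, inf_relIndex_right]
    _ = (H ⊓ N).relIndex H * H.index := by
        rw [relIndex_mul_index inf_le_right, relIndex_mul_index inf_le_left]
    _ = N.relIndex H * H.index := by rw [inf_relIndex_left]

theorem range_index_subset_mul [N.FiniteIndex] :
    Set.range (fun H : Subgroup G ↦ H.index) ⊆
      Set.range (fun H : Subgroup N ↦ H.index) *
        Set.range (fun H : Subgroup (G ⧸ N) ↦ H.index) := by
  rintro _ ⟨H, rfl⟩
  exact ⟨_, ⟨H.subgroupOf N, rfl⟩, _, ⟨H.map (QuotientGroup.mk' N), rfl⟩,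
    by beta_reduce; rw [index_map_mk', ← relIndex, relIndex_mul_index_sup]⟩

end Subgroup

/-- For a finite group `G` and a normal subgroup `N ⊴ G`, one has
`𝒥(G) ≤ 𝒥(N) · 𝒥(G/N)`. -/
theorem HSJ_le_HSJ_mul_HSJ_quotient (G : Type*) [Group G] [Finite G]
    (N : Subgroup G) [N.Normal] :
    HSJ G ≤ HSJ N * HSJ (G ⧸ N) :=
  finsum_mem_le_finsum_mem_mul_finsum_mem (fun m : ℕ ↦ by positivity)
    (fun a b ↦ by rw [Nat.cast_mul, one_div_mul_one_div]) (Set.finite_range _)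
    (Set.finite_range _) N.range_index_subset_mul
end

section
/- For every positive integer m, √(2πm) · (m/e)^m · e^{1/(12m+1)} < m! < √(2πm) · (m/e)^m · e^{1/(12m)}. -/
open Real Filter Topology Stirling
open scoped Nat

/-!
With `s n = n! / (√(2n) (n/e)^n)`, which tends to `√π`, the step `log s n - log s (n+1)` is
`∑_{k ≥ 1} r^k / (2k+1)` with `r = (2n+1)⁻²`. Comparing termwise with the geometric series
`∑ (r/3)^k` and `∑ r^k / 3` traps it strictly between `1/(12n+1) - 1/(12n+13)` and
`1/(12n) - 1/(12n+12)` (Robbins). Hence `log s n - 1/(12n)` increases and `log s n - 1/(12n+1)`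
decreases, both to `log √π`.
-/

section OddSeries

variable {r S : ℝ} (hr₀ : 0 < r) (hr₁ : r < 1)
  (hS : HasSum (fun k : ℕ => 1 / (2 * ((k : ℝ) + 1) + 1) * r ^ (k + 1)) S)
include hr₀ hr₁ hS

theorem div_three_sub_lt_of_hasSum_odd : r / (3 - r) < S := by
  have hgeom : HasSum (fun k : ℕ => (r / 3) ^ (k + 1)) (r / (3 - r)) := by
    have h := (hasSum_geometric_of_lt_one (by positivity) (by linarith : r / 3 < 1)).mul_left
      (r / 3)
    simp_rw [← pow_succ'] at h
    rwa [show r / 3 * (1 - r / 3)⁻¹ = r / (3 - r) by field_simp] at h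
  refine hasSum_lt (i := 1) (fun k => ?_) ?_ hgeom hS
  · have h3 : 2 * ((k : ℝ) + 1) + 1 ≤ 3 ^ (k + 1) := by
      have := one_add_mul_le_pow (by norm_num : (-2 : ℝ) ≤ 2) (k + 1)
      norm_num at this ⊢
      linarith
    rw [div_pow, one_div_mul_eq_div]
    gcongr
  · norm_num
    nlinarith [pow_pos hr₀ 2]

theorem lt_div_three_mul_one_sub_of_hasSum_odd : S < r / (3 * (1 - r)) := by
  have hgeom : HasSum (fun k : ℕ => r ^ (k + 1) / 3) (r / (3 * (1 - r))) := by
    have h := ((hasSum_geometric_of_lt_one hr₀.le hr₁).mul_left r).div_const 3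
    simp_rw [← pow_succ'] at h
    rwa [show r * (1 - r)⁻¹ / 3 = r / (3 * (1 - r)) by field_simp] at h
  refine hasSum_lt (i := 1) (fun k => ?_) ?_ hS hgeom
  · rw [one_div_mul_eq_div]
    gcongr
    push_cast
    linarith [k.cast_nonneg (α := ℝ)]
  · norm_num
    nlinarith [pow_pos hr₀ 2]

end OddSeries

theorem sub_lt_sub_of_tendsto_of_sub_succ_lt {a b : ℕ → ℝ} {A B : ℝ} {N : ℕ}
    (ha : Tendsto a atTop (𝓝 A)) (hb : Tendsto b atTop (𝓝 B))
    (h : ∀ n ≥ N, a n - a (n + 1) < b n - b (n + 1)) {n : ℕ} (hn : N ≤ n) :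
    a n - A < b n - B := by
  obtain ⟨k, rfl⟩ := Nat.exists_eq_add_of_le' hn
  set f : ℕ → ℝ := fun j => b (j + N) - a (j + N)
  have hanti : StrictAnti f := strictAnti_nat_of_succ_lt fun j => by
    have := h (j + N) (Nat.le_add_left N j)
    simp only [f, Nat.add_right_comm j 1 N]
    linarith
  have hlim : Tendsto f atTop (𝓝 (B - A)) :=
    (hb.sub ha).comp (tendsto_add_atTop_nat N)
  have := (hanti.antitone.le_of_tendsto hlim (k + 1)).trans_lt (hanti k.lt_succ_self)
  simp only [f] at this
  linarith

theorem tendsto_one_div_mul_add_atTop_nhds_zero {a : ℝ} (ha : 0 < a) (c : ℝ) :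
    Tendsto (fun n : ℕ => 1 / (a * n + c)) atTop (𝓝 0) := by
  simpa only [one_div, Function.comp_def] using tendsto_inv_atTop_zero.comp
    (tendsto_atTop_add_const_right _ c (tendsto_natCast_atTop_atTop.const_mul_atTop ha))

theorem one_div_two_mul_add_one_sq_lt_one {x : ℝ} (hx : 0 < x) : (1 / (2 * x + 1)) ^ 2 < 1 := by
  rw [div_pow, one_pow, div_lt_one (by positivity)]
  nlinarith

namespace Stirling

theorem log_stirlingSeq_sdiff_lt {n : ℕ} (hn : 0 < n) :
    log (stirlingSeq n) - log (stirlingSeq (n + 1)) <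
      1 / (12 * (n : ℝ)) - 1 / (12 * ((n + 1 : ℕ) : ℝ)) := by
  obtain ⟨n, rfl⟩ := Nat.exists_eq_succ_of_ne_zero hn.ne'
  have hS := log_stirlingSeq_sdiff_hasSum n
  have hx : (1 : ℝ) ≤ n + 1 := by simp
  push_cast at hS ⊢
  generalize (n : ℝ) + 1 = x at hS hx ⊢
  have hr₀ : 0 < (1 / (2 * x + 1)) ^ 2 := by positivity
  have hr₁ := one_div_two_mul_add_one_sq_lt_one (by linarith : 0 < x)
  refine (lt_div_three_mul_one_sub_of_hasSum_odd hr₀ hr₁ hS).trans_eq ?_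
  have : (2 * x + 1) ^ 2 - 1 ≠ 0 := by nlinarith
  field_simp
  ring

theorem lt_log_stirlingSeq_sdiff {n : ℕ} (hn : 0 < n) :
    1 / (12 * (n : ℝ) + 1) - 1 / (12 * ((n + 1 : ℕ) : ℝ) + 1) <
      log (stirlingSeq n) - log (stirlingSeq (n + 1)) := by
  obtain ⟨n, rfl⟩ := Nat.exists_eq_succ_of_ne_zero hn.ne'
  have hS := log_stirlingSeq_sdiff_hasSum n
  have hx : (1 : ℝ) ≤ n + 1 := by simp
  push_cast at hS ⊢
  generalize (n : ℝ) + 1 = x at hS hx ⊢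
  have hr₀ : 0 < (1 / (2 * x + 1)) ^ 2 := by positivity
  have hr₁ := one_div_two_mul_add_one_sq_lt_one (by linarith : 0 < x)
  refine lt_of_le_of_lt ?_ (div_three_sub_lt_of_hasSum_odd hr₀ hr₁ hS)
  have hr : (1 / (2 * x + 1)) ^ 2 / (3 - (1 / (2 * x + 1)) ^ 2) =
      1 / (3 * (2 * x + 1) ^ 2 - 1) := by
    have : 3 * (2 * x + 1) ^ 2 - 1 ≠ 0 := by nlinarith
    field_simp
  rw [hr, div_sub_div _ _ (by positivity) (by positivity),
    div_le_div_iff₀ (by positivity) (by nlinarith)]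
  nlinarith

theorem tendsto_log_stirlingSeq : Tendsto (fun n => log (stirlingSeq n)) atTop (𝓝 (log √π)) :=
  (continuousAt_log (by positivity)).tendsto.comp tendsto_stirlingSeq_sqrt_pi

theorem log_stirlingSeq_lt {n : ℕ} (hn : 0 < n) :
    log (stirlingSeq n) < log √π + 1 / (12 * n) := by
  have := sub_lt_sub_of_tendsto_of_sub_succ_lt tendsto_log_stirlingSeq
    (by simpa using tendsto_one_div_mul_add_atTop_nhds_zero (by norm_num) 0)
    (fun n hn => log_stirlingSeq_sdiff_lt hn) hn
  linarith

theorem lt_log_stirlingSeq {n : ℕ} (hn : 0 < n) :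
    log √π + 1 / (12 * n + 1) < log (stirlingSeq n) := by
  have := sub_lt_sub_of_tendsto_of_sub_succ_lt
    (tendsto_one_div_mul_add_atTop_nhds_zero (by norm_num) 1) tendsto_log_stirlingSeq
    (fun n hn => lt_log_stirlingSeq_sdiff hn) hn
  linarith

theorem stirlingSeq_pos {n : ℕ} (hn : 0 < n) : 0 < stirlingSeq n := by
  obtain ⟨n, rfl⟩ := Nat.exists_eq_succ_of_ne_zero hn.ne'
  exact stirlingSeq'_pos n

theorem sqrt_pi_mul_exp_lt_stirlingSeq {n : ℕ} (hn : 0 < n) :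
    √π * exp (1 / (12 * n + 1)) < stirlingSeq n := by
  have := (lt_log_iff_exp_lt (stirlingSeq_pos hn)).1 (lt_log_stirlingSeq hn)
  rwa [exp_add, exp_log (by positivity)] at this

theorem stirlingSeq_lt_sqrt_pi_mul_exp {n : ℕ} (hn : 0 < n) :
    stirlingSeq n < √π * exp (1 / (12 * n)) := by
  have := (log_lt_iff_lt_exp (stirlingSeq_pos hn)).1 (log_stirlingSeq_lt hn)
  rwa [exp_add, exp_log (by positivity)] at this

theorem factorial_eq_stirlingSeq_mul {n : ℕ} (hn : 0 < n) :
    (n ! : ℝ) = stirlingSeq n * (√(2 * n) * (n / exp 1) ^ n) := by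
  have : (0 : ℝ) < n := by exact_mod_cast hn
  exact (div_mul_cancel₀ _ (by positivity)).symm

end Stirling

/-- Stirling's inequalities: for every positive integer `m`,
`√(2πm) (m/e)^m e^{1/(12m+1)} < m! < √(2πm) (m/e)^m e^{1/(12m)}`. -/
theorem stirling_inequalities (m : ℕ) (hm : 0 < m) :
    Real.sqrt (2 * Real.pi * m) * ((m : ℝ) / Real.exp 1) ^ m *
        Real.exp (1 / (12 * (m : ℝ) + 1)) < (m.factorial : ℝ) ∧
      (m.factorial : ℝ) <
        Real.sqrt (2 * Real.pi * m) * ((m : ℝ) / Real.exp 1) ^ m *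
          Real.exp (1 / (12 * (m : ℝ))) := by
  have hpos : 0 < √(2 * m) * (m / exp 1) ^ m := by
    have : (0 : ℝ) < m := by exact_mod_cast hm
    positivity
  have hsqrt : √(2 * π * m) = √π * √(2 * m) := by
    rw [← sqrt_mul pi_pos.le]
    ring_nf
  rw [factorial_eq_stirlingSeq_mul hm, hsqrt]
  constructor
  · calc _ = √π * exp (1 / (12 * m + 1)) * (√(2 * m) * (m / exp 1) ^ m) := by ring
      _ < _ := mul_lt_mul_of_pos_right (sqrt_pi_mul_exp_lt_stirlingSeq hm) hpos
  · calc _ < √π * exp (1 / (12 * m)) * (√(2 * m) * (m / exp 1) ^ m) :=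
          mul_lt_mul_of_pos_right (stirlingSeq_lt_sqrt_pi_mul_exp hm) hpos
      _ = _ := by ring
end

section
/- Let p_1 < p_2 < … be the prime numbers in increasing order and for each n let G_n be the cyclic group of order p_1 · p_2 ⋯ p_n. Then 𝒥(G_n) ≥ ∑_{i=1}^{n} 1/p_i, and consequently 𝒥(G_n) → ∞ as n → ∞; in particular, 𝒥 is unbounded on the class of finite groups. -/
lemma IsCyclic.exists_subgroup_index_eq {G : Type*} [Group G] [IsCyclic G] [Finite G] {d : ℕ}
    (hd : d ∣ Nat.card G) : ∃ H : Subgroup G, H.index = d := by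
  -- `powMonoidHom` is only available in commutative groups
  let := IsCyclic.commGroup (α := G)
  exact ⟨(powMonoidHom d : G →* G).range, by
    rw [IsCyclic.index_powMonoidHom_range, Nat.gcd_eq_right hd]⟩

lemma IsCyclic.range_index_eq_divisors (G : Type*) [Group G] [IsCyclic G] [Finite G] :
    Set.range (fun H : Subgroup G => H.index) = (Nat.card G).divisors := by
  ext d
  simp only [Set.mem_range, Finset.mem_coe, Nat.mem_divisors, Nat.card_pos.ne', ne_eq,
    not_false_eq_true, and_true]
  exact ⟨fun ⟨H, hH⟩ => hH ▸ H.index_dvd_card, IsCyclic.exists_subgroup_index_eq⟩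

lemma IsCyclic.HSJ_eq_sum_divisors (G : Type*) [Group G] [IsCyclic G] [Finite G] :
    HSJ G = ∑ d ∈ (Nat.card G).divisors, (1 : ℝ) / d := by
  rw [HSJ, IsCyclic.range_index_eq_divisors, finsum_mem_coe_finset]

lemma sum_range_one_div_nth_prime_le_sum_divisors (n : ℕ) :
    ∑ i ∈ Finset.range n, (1 : ℝ) / (Nat.nth Nat.Prime i : ℝ) ≤
      ∑ d ∈ (∏ i ∈ Finset.range n, Nat.nth Nat.Prime i).divisors, (1 : ℝ) / d := by
  rw [← Finset.sum_image (f := fun m : ℕ => (1 : ℝ) / m) (g := Nat.nth Nat.Prime)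
    fun i _ j _ h => Nat.nth_injective Nat.infinite_setOfPred_prime h]
  refine Finset.sum_le_sum_of_subset_of_nonneg ?_ fun _ _ _ => by positivity
  intro _ hp
  obtain ⟨i, hi, rfl⟩ := Finset.mem_image.mp hp
  exact Nat.mem_divisors.mpr ⟨Finset.dvd_prod_of_mem _ hi,
    Finset.prod_ne_zero_iff.mpr fun j _ => (Nat.prime_nth_prime j).ne_zero⟩

lemma not_summable_one_div_nth_prime :
    ¬ Summable (fun i => (1 : ℝ) / (Nat.nth Nat.Prime i : ℝ)) := by
  let e : ℕ ≃ Nat.Primes := Equiv.ofBijective (fun i => ⟨_, Nat.prime_nth_prime i⟩)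
    ⟨fun i j h => Nat.nth_injective Nat.infinite_setOfPred_prime (congrArg Subtype.val h),
     fun p => (Nat.exists_lt_card_nth_eq p.2).imp fun i hi => Subtype.ext hi.2⟩
  exact (e.summable_iff (f := fun p : Nat.Primes => (1 / p : ℝ))).not.mpr
    Nat.Primes.not_summable_one_div

lemma tendsto_sum_range_one_div_nth_prime_atTop :
    Filter.Tendsto (fun n => ∑ i ∈ Finset.range n, (1 : ℝ) / (Nat.nth Nat.Prime i : ℝ))
      Filter.atTop Filter.atTop :=
  (not_summable_iff_tendsto_nat_atTop_of_nonneg fun _ => by positivity).mp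
    not_summable_one_div_nth_prime

/-- Let `p_1 < p_2 < …` be the primes in increasing order (here `Nat.nth Nat.Prime i`
is `p_{i+1}`) and let `G n` be a cyclic group of order `p_1 ⋯ p_n`. Then
`𝒥(G n) ≥ ∑_{i=1}^{n} 1/p_i`; consequently `𝒥(G n) → ∞` as `n → ∞`, so `𝒥` is
unbounded on the class of finite groups. -/
theorem HSJ_primorial_cyclic_unbounded (G : ℕ → Type*) [∀ n, Group (G n)]
    [∀ n, Finite (G n)] (hcyc : ∀ n, IsCyclic (G n))
    (hcard : ∀ n, Nat.card (G n) = ∏ i ∈ Finset.range n, Nat.nth Nat.Prime i) :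
    (∀ n, (∑ i ∈ Finset.range n, (1 : ℝ) / (Nat.nth Nat.Prime i : ℝ)) ≤ HSJ (G n)) ∧
      Filter.Tendsto (fun n => HSJ (G n)) Filter.atTop Filter.atTop ∧
      ∀ C : ℝ, ∃ n, C < HSJ (G n) := by
  have hbound : ∀ n, (∑ i ∈ Finset.range n, (1 : ℝ) / (Nat.nth Nat.Prime i : ℝ)) ≤
      HSJ (G n) := fun n => by
    have := hcyc n
    rw [IsCyclic.HSJ_eq_sum_divisors, hcard n]
    exact sum_range_one_div_nth_prime_le_sum_divisors n
  have htend : Filter.Tendsto (fun n => HSJ (G n)) Filter.atTop Filter.atTop :=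
    Filter.tendsto_atTop_mono hbound tendsto_sum_range_one_div_nth_prime_atTop
  exact ⟨hbound, htend, fun C => (htend.eventually_gt_atTop C).exists⟩
end
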